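/- For each k with 1 ≤ k ≤ n, the function α_k(x) = sin(πkx/(n+1)) / (2cos(πk/(n+1)))^x satisfies the recursion (λ_k+1)·α_k(x+1) − (λ_k+1)·α_k(x) + α_k(x−1) = 0 for 1 ≤ x ≤ n with λ_k = 4cos²(πk/(n+1)) − 1, together with the boundary conditions α_k(0) = α_k(n+1) = 0, provided cos(πk/(n+1)) ≠ 0. -/
import Mathlib


open Real

/-- The eigenfunctions α_k(x) = sin(πkx/(n+1)) / (2cos(πk/(n+1)))^x satisfy the
transfer recursion with eigenvalue λ_k = 4cos²(πk/(n+1)) − 1 and Dirichlet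
boundary conditions. -/
theorem eigenfunction_recursion (n k : ℕ) (hn : 1 ≤ n) (hk1 : 1 ≤ k) (hkn : k ≤ n)
    (hcos : Real.cos (π * k / (n + 1)) ≠ 0) :
    (∀ x : ℕ, 1 ≤ x → x ≤ n →
      ((4 * Real.cos (π * k / (n + 1)) ^ 2 - 1) + 1) *
          (Real.sin (π * k * (x + 1) / (n + 1)) / (2 * Real.cos (π * k / (n + 1))) ^ (x + 1)) -
        ((4 * Real.cos (π * k / (n + 1)) ^ 2 - 1) + 1) *
          (Real.sin (π * k * x / (n + 1)) / (2 * Real.cos (π * k / (n + 1))) ^ x) +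
        (Real.sin (π * k * (x - 1) / (n + 1)) / (2 * Real.cos (π * k / (n + 1))) ^ (x - 1)) = 0) ∧
    Real.sin (π * k * 0 / (n + 1)) / (2 * Real.cos (π * k / (n + 1))) ^ (0 : ℕ) = 0 ∧
    Real.sin (π * k * (n + 1) / (n + 1)) / (2 * Real.cos (π * k / (n + 1))) ^ (n + 1) = 0 := by
  refine ⟨?_, by simp, ?_⟩
  · intro x hx1 hxn
    obtain ⟨m, rfl⟩ : ∃ m, x = m + 1 := ⟨x - 1, (Nat.succ_pred_eq_of_pos hx1).symm⟩
    set θ := π * k / (n + 1) with hθ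
    have e1 : π * k * ((m + 1 : ℕ) + 1 : ℝ) / (n + 1) = θ * (m + 1) + θ := by
      rw [hθ]; push_cast; ring
    have e2 : π * k * ((m + 1 : ℕ) : ℝ) / (n + 1) = θ * (m + 1) := by
      rw [hθ]; push_cast; ring
    have e3 : π * k * (((m + 1 : ℕ) : ℝ) - 1) / (n + 1) = θ * (m + 1) - θ := by
      rw [hθ]; push_cast; ring
    rw [e1, e2, e3, Real.sin_add, Real.sin_sub]
    have hm : m + 1 - 1 = m := rfl
    rw [hm, pow_succ, pow_succ]
    have h2 : ((2 : ℝ) * Real.cos θ) ^ m ≠ 0 :=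
      pow_ne_zero _ (mul_ne_zero two_ne_zero hcos)
    field_simp
    ring
  · have hne : ((n : ℝ) + 1) ≠ 0 := by positivity
    have : π * k * ((n : ℝ) + 1) / (n + 1) = k * π := by field_simp
    rw [this, Real.sin_nat_mul_pi, zero_div]
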